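/- For every propositional base K and every formula φ, if K ⊩₁ φ then K ⊢_{LPm} φ. -/

import Mathlib

namespace Occ

/-- Propositional formulas over variables indexed by `ℕ`,
built from variables using negation and conjunction. -/
inductive Form : Type where
  | var : ℕ → Form
  | neg : Form → Form
  | conj : Form → Form → Form
deriving DecidableEq

/-- Boolean evaluation of a formula under an interpretation `w`. -/
def eval (w : ℕ → Bool) : Form → Bool
  | .var p => w p
  | .neg φ => !(eval w φ)
  | .conj φ ψ => eval w φ && eval w ψ

/-- The variables occurring in a formula. -/
def vars : Form → Finset ℕ
  | .var p => {p}
  | .neg φ => vars φ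
  | .conj φ ψ => vars φ ∪ vars ψ

/-- A step in a path addressing a subformula occurrence. -/
inductive Step : Type where
  | neg | left | right
deriving DecidableEq

/-- `occAt φ l pol = some (p, pol')` iff the path `l` addresses an occurrence of the
variable `p` in `φ`, and this occurrence has polarity `pol'` (`true` = positive)
when the ambient polarity of `φ` is `pol`. -/
def occAt : Form → List Step → Bool → Option (ℕ × Bool)
  | .var p, [], pol => some (p, pol)
  | .neg φ, .neg :: l, pol => occAt φ l (!pol)
  | .conj φ _, .left :: l, pol => occAt φ l pol
  | .conj _ ψ, .right :: l, pol => occAt ψ l pol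
  | _, _, _ => none

/-- A variable occurrence in a base: a formula together with a path into it. -/
abbrev Occurrence : Type := Form × List Step

/-- A propositional base: a finite set of formulas. -/
abbrev PB : Type := Finset Form

/-- `o` is a variable occurrence in the base `K`. -/
def IsOcc (K : PB) (o : Occurrence) : Prop :=
  o.1 ∈ K ∧ ∃ p pol, occAt o.1 o.2 true = some (p, pol)

/-- `o` is an occurrence of the variable `p` in `K`, of polarity `pol`. -/
def IsOccOf (K : PB) (o : Occurrence) (p : ℕ) (pol : Bool) : Prop :=
  o.1 ∈ K ∧ occAt o.1 o.2 true = some (p, pol)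

/-- `o` is an occurrence of the variable `p` in `K`. -/
def IsOccVar (K : PB) (o : Occurrence) (p : ℕ) : Prop :=
  ∃ pol, IsOccOf K o p pol

/-- `o` is a positive variable occurrence in `K`. -/
def IsPosOcc (K : PB) (o : Occurrence) : Prop := ∃ p, IsOccOf K o p true

/-- `o` is a negative variable occurrence in `K`. -/
def IsNegOcc (K : PB) (o : Occurrence) : Prop := ∃ p, IsOccOf K o p false

/-- `o` and `o'` are occurrences of the same variable. -/
def sameVar (o o' : Occurrence) : Prop :=
  ∃ p pol pol', occAt o.1 o.2 true = some (p, pol) ∧ occAt o'.1 o'.2 true = some (p, pol')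

/-- The variables occurring in a base. -/
def varsPB (K : PB) : Finset ℕ := K.sup vars

/-- `w` is a (Boolean) model of the base `K` (i.e. of the conjunction of its formulas). -/
def modelsPB (w : ℕ → Bool) (K : PB) : Prop := ∀ φ ∈ K, eval w φ = true

/-- A base is consistent iff the conjunction of its formulas has a model. -/
def ConsistentPB (K : PB) : Prop := ∃ w, modelsPB w K

/-- Classical entailment from a base. -/
def Entails (K : PB) (φ : Form) : Prop := ∀ w, modelsPB w K → eval w φ = true

/-- Rename every variable occurrence of a formula, the new variable of the
occurrence at path `l` being `f l`. -/
def renameBy : (List Step → ℕ) → Form → Form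
  | f, .var _ => .var (f [])
  | f, .neg φ => .neg (renameBy (fun l => f (.neg :: l)) φ)
  | f, .conj φ ψ =>
      .conj (renameBy (fun l => f (.left :: l)) φ) (renameBy (fun l => f (.right :: l)) ψ)

/-- The formula `φ` (viewed as a member of a base) with each occurrence `o`
replaced by the variable `R o`. -/
def renameForm (R : Occurrence → ℕ) (φ : Form) : Form :=
  renameBy (fun l => R (φ, l)) φ

/-- A C-renaming of `K`: it assigns a pairwise distinct fresh variable to each
occurrence of `K`. -/
structure IsCRenaming (K : PB) (R : Occurrence → ℕ) : Prop where
  fresh : ∀ o, IsOcc K o → R o ∉ varsPB K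
  inj : ∀ o o', IsOcc K o → IsOcc K o' → R o = R o' → o = o'

/-- Binary relations on occurrences, viewed as sets of ordered pairs. -/
abbrev Rel : Type := Set (Occurrence × Occurrence)

/-- `r` is an equivalence relation on `Occ(K)`. -/
structure IsEquivOn (K : PB) (r : Rel) : Prop where
  dom : ∀ q ∈ r, IsOcc K q.1 ∧ IsOcc K q.2
  refl : ∀ o, IsOcc K o → (o, o) ∈ r
  symm : ∀ q ∈ r, (q.2, q.1) ∈ r
  trans : ∀ a b c : Occurrence, (a, b) ∈ r → (b, c) ∈ r → (a, c) ∈ r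

/-- Compliance: related occurrences are occurrences of the same variable. -/
def Compliant (r : Rel) : Prop := ∀ q ∈ r, sameVar q.1 q.2

/-- Consistency of the formula `⋀R(K) ∧ ⋀_{(o,o')∈r} (R(o) ↔ R(o'))`. -/
def RelConsistent (K : PB) (R : Occurrence → ℕ) (r : Rel) : Prop :=
  ∃ w : ℕ → Bool, (∀ φ ∈ K, eval w (renameForm R φ) = true) ∧
    ∀ q ∈ r, w (R q.1) = w (R q.2)

/-- Minimal Inconsistency Relation of `K` (w.r.t. the C-renaming `R`). -/
def IsMIR (K : PB) (R : Occurrence → ℕ) (r : Rel) : Prop :=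
  IsEquivOn K r ∧ Compliant r ∧ ¬ RelConsistent K R r ∧
    ∀ r', IsEquivOn K r' → Compliant r' → ¬ RelConsistent K R r' → ¬ r' ⊂ r

/-- Maximal Consistency Relation of `K` (w.r.t. the C-renaming `R`). -/
def IsMCR (K : PB) (R : Occurrence → ℕ) (r : Rel) : Prop :=
  IsEquivOn K r ∧ Compliant r ∧ RelConsistent K R r ∧
    ∀ r', IsEquivOn K r' → Compliant r' → RelConsistent K R r' → ¬ r ⊂ r'

/-- The relation `∼_c^K`: relating occurrences of `K` of the same variable. -/
def sameVarRel (K : PB) : Rel :=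
  {q | IsOcc K q.1 ∧ IsOcc K q.2 ∧ sameVar q.1 q.2}

/-- `PN(r)`: related pairs consisting of a positive and a negative occurrence. -/
def PN (K : PB) (r : Rel) : Rel :=
  {q | q ∈ r ∧ IsPosOcc K q.1 ∧ IsNegOcc K q.2}

/-- A BMCR: an MCR satisfying Maximality-2. -/
def IsBMCR (K : PB) (R : Occurrence → ℕ) (r : Rel) : Prop :=
  IsMCR K R r ∧
    ∀ r', IsEquivOn K r' → Compliant r' → RelConsistent K R r' → ¬ PN K r ⊂ PN K r'

/-- `H` is a hitting set of the collection `S`. -/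
def IsHittingSet {α : Type} (S : Set (Set α)) (H : Set α) : Prop :=
  ∀ s ∈ S, (s ∩ H).Nonempty

/-- `H` is a minimal hitting set of the collection `S`. -/
def IsMinHittingSet {α : Type} (S : Set (Set α)) (H : Set α) : Prop :=
  IsHittingSet S H ∧ ∀ H', H' ⊂ H → ¬ IsHittingSet S H'

/-- `r` is `H`-maximal (for an equivalence relation `r ⊆ ∼_c^K`). -/
def IsHMaximal (K : PB) (H r : Rel) : Prop :=
  r ∩ H = ∅ ∧
    ∀ r', IsEquivOn K r' → r' ⊆ sameVarRel K → r ⊂ r' → (r' ∩ H).Nonempty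

/-- `r` is `H`-minimal (for an equivalence relation `r ⊆ ∼_c^K`). -/
def IsHMinimal (K : PB) (H r : Rel) : Prop :=
  H ⊆ r ∧ ∀ r', IsEquivOn K r' → r' ⊂ r → ¬ H ⊆ r'

/-- The set of all MIRs of `K`. -/
def MIRs (K : PB) (R : Occurrence → ℕ) : Set Rel := {r | IsMIR K R r}

/-- The set of all C-MCRs of `K`: relations `θ ⊆ ∼_c^K` with `∼_c^K ∖ θ` an MCR. -/
def CMCRs (K : PB) (R : Occurrence → ℕ) : Set Rel :=
  {θ | θ ⊆ sameVarRel K ∧ IsMCR K R (sameVarRel K \ θ)}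

/-- `ρ` is a `∼`-renaming for the equivalence relation `r` on `Occ(K)`:
it assigns a distinct variable to each equivalence class (so it is constant on
classes and distinguishes distinct classes), and any class containing all the
occurrences of a variable `p` is mapped to `p` itself. -/
def IsClassRenaming (K : PB) (r : Rel) (ρ : Occurrence → ℕ) : Prop :=
  (∀ o o', IsOcc K o → IsOcc K o' → (ρ o = ρ o' ↔ (o, o') ∈ r)) ∧
    (∀ o p, IsOccVar K o p → (∀ o', IsOccVar K o' p → (o, o') ∈ r) → ρ o = p)

/-- `σ` encodes a tuple `(q₁,…,q_m) ∈ P(ρ_∼, S)` where `S = (p₁,…,p_m)`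
enumerates `var(K) ∩ var(φ)`: it maps each shared variable `p` to a member of
`⌈ρ⌉(p)` and is the identity elsewhere. -/
def IsTupleChoice (K : PB) (φ : Form) (ρ : Occurrence → ℕ) (σ : ℕ → ℕ) : Prop :=
  (∀ p, p ∈ varsPB K → p ∈ vars φ → ∃ o, IsOccVar K o p ∧ σ p = ρ o) ∧
    (∀ p, ¬ (p ∈ varsPB K ∧ p ∈ vars φ) → σ p = p)

/-- Simultaneous substitution of variables by variables. -/
def substV (σ : ℕ → ℕ) : Form → Form
  | .var p => .var (σ p)
  | .neg φ => .neg (substV σ φ)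
  | .conj φ ψ => .conj (substV σ φ) (substV σ ψ)

/-- `ρ_∼(K) ⊢ ψ`. -/
def rhoEntails (K : PB) (ρ : Occurrence → ℕ) (ψ : Form) : Prop :=
  ∀ w : ℕ → Bool, (∀ φ ∈ K, eval w (renameForm ρ φ) = true) → eval w ψ = true

/-- The inference relation `K ⊩₁ φ`. -/
def Inf1 (K : PB) (R : Occurrence → ℕ) (φ : Form) : Prop :=
  ∀ r ρ, IsMCR K R r → IsClassRenaming K r ρ →
    ∃ σ, IsTupleChoice K φ ρ σ ∧ rhoEntails K ρ (substV σ φ)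

/-- The inference relation `K ⊩₂ φ`. -/
def Inf2 (K : PB) (R : Occurrence → ℕ) (φ : Form) : Prop :=
  ∀ r ρ, IsMCR K R r → IsClassRenaming K r ρ →
    ∀ σ, IsTupleChoice K φ ρ σ → rhoEntails K ρ (substV σ φ)

/-- The inference relation `K ⊩₁^B φ`. -/
def Inf1B (K : PB) (R : Occurrence → ℕ) (φ : Form) : Prop :=
  ∀ r ρ, IsBMCR K R r → IsClassRenaming K r ρ →
    ∃ σ, IsTupleChoice K φ ρ σ ∧ rhoEntails K ρ (substV σ φ)

/-- The inference relation `K ⊩₂^B φ`. -/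
def Inf2B (K : PB) (R : Occurrence → ℕ) (φ : Form) : Prop :=
  ∀ r ρ, IsBMCR K R r → IsClassRenaming K r ρ →
    ∀ σ, IsTupleChoice K φ ρ σ → rhoEntails K ρ (substV σ φ)

/-- `μ` is an o-model of `K`: any interpretation `w` with `w (R o) = μ o` for all
occurrences `o` of `K` is a model of `⋀R(K)`. -/
def OModel (K : PB) (R : Occurrence → ℕ) (μ : Occurrence → Bool) : Prop :=
  ∀ w : ℕ → Bool, (∀ o, IsOcc K o → w (R o) = μ o) →
    ∀ φ ∈ K, eval w (renameForm R φ) = true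

/-- `diff_a(μ)`: pairs of occurrences of the same variable on which `μ` differs. -/
def diffA (K : PB) (μ : Occurrence → Bool) : Rel :=
  {q | IsOcc K q.1 ∧ IsOcc K q.2 ∧ sameVar q.1 q.2 ∧ μ q.1 ≠ μ q.2}

/-- `μ` is an a-minimal o-model of `K`. -/
def AMinOModel (K : PB) (R : Occurrence → ℕ) (μ : Occurrence → Bool) : Prop :=
  OModel K R μ ∧ ∀ μ', OModel K R μ' → ¬ diffA K μ' ⊂ diffA K μ

/-- A Boolean interpretation `w` is compatible with an o-interpretation `μ`. -/
def Compatible (K : PB) (μ : Occurrence → Bool) (w : ℕ → Bool) : Prop :=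
  ∀ p ∈ varsPB K, ∃ o, IsOccVar K o p ∧ w p = μ o

/-- The inference relation `K ⊩_{a1} φ`. -/
def InfA1 (K : PB) (R : Occurrence → ℕ) (φ : Form) : Prop :=
  ∀ μ, AMinOModel K R μ → ∃ w, Compatible K μ w ∧ eval w φ = true

/-- The inference relation `K ⊩_{a2} φ`. -/
def InfA2 (K : PB) (R : Occurrence → ℕ) (φ : Form) : Prop :=
  ∀ μ, AMinOModel K R μ → ∀ w, Compatible K μ w → eval w φ = true

/-- LP_m evaluation: an LP_m interpretation assigns a (nonempty) set of truth
values to each variable; it extends to formulas pointwise. -/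
def lpEval (lam : ℕ → Set Bool) : Form → Set Bool
  | .var p => lam p
  | .neg φ => (fun v => !v) '' lpEval lam φ
  | .conj φ ψ => Set.image2 (· && ·) (lpEval lam φ) (lpEval lam ψ)

/-- `lam` is an LP_m interpretation: each variable gets a nonempty set of values. -/
def IsLPInterp (lam : ℕ → Set Bool) : Prop := ∀ p, (lam p).Nonempty

/-- `lam` is an LP_m model of `⋀K`. -/
def LPModelPB (lam : ℕ → Set Bool) (K : PB) : Prop := ∀ φ ∈ K, true ∈ lpEval lam φ

/-- `λ! = {p : λ(p) = {0,1}}`. -/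
def lpBang (lam : ℕ → Set Bool) : Set ℕ := {p | lam p = Set.univ}

/-- `lam` is a minimal LP_m model of `⋀K`. -/
def MinLPModelPB (K : PB) (lam : ℕ → Set Bool) : Prop :=
  IsLPInterp lam ∧ LPModelPB lam K ∧
    ∀ lam', IsLPInterp lam' → LPModelPB lam' K → ¬ lpBang lam' ⊂ lpBang lam

/-- `K ⊢_{LPm} φ`. -/
def LPmEntails (K : PB) (φ : Form) : Prop :=
  ∀ lam, MinLPModelPB K lam → true ∈ lpEval lam φ

/-- Replace the subformula occurrence of `φ` addressed by the path `l` by `ψ`. -/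
def replaceAt : Form → List Step → Form → Form
  | _, [], ψ => ψ
  | .neg φ, .neg :: l, ψ => .neg (replaceAt φ l ψ)
  | .conj φ χ, .left :: l, ψ => .conj (replaceAt φ l ψ) χ
  | .conj φ χ, .right :: l, ψ => .conj φ (replaceAt χ l ψ)
  | φ, _, _ => φ

/-- The equivalence relation `∼_λ` induced on `Occ(K)` by an LP_m interpretation:
its classes are `Occ(p,K)` for `|λ(p)| = 1` and `PosOcc(p,K)`, `NegOcc(p,K)` for
`λ(p) = {0,1}`. -/
def lamRel (K : PB) (lam : ℕ → Set Bool) : Rel :=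
  {q | ∃ p pol pol', IsOccOf K q.1 p pol ∧ IsOccOf K q.2 p pol' ∧
    (lam p = Set.univ → pol = pol')}

open scoped Classical in
/-- The o-interpretation `μ_λ^K` associated with an LP_m interpretation `λ`. -/
noncomputable def muOf (lam : ℕ → Set Bool) (o : Occurrence) : Bool :=
  match occAt o.1 o.2 true with
  | some (p, pol) =>
      if lam p = ({false} : Set Bool) then false
      else if lam p = ({true} : Set Bool) then true
      else pol
  | none => false

end Occ

/-!
A minimal LP_m model `λ` of `K` determines the relation `∼_λ`, which keeps all occurrences of a
variable together when `λ(p)` is a singleton and only those of equal polarity when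
`λ(p) = {0,1}`. Giving each occurrence the value `λ(p)` if that is a singleton and its own
polarity otherwise turns `λ` into a model of the renamed base that respects `∼_λ`; and a model
of a strictly coarser relation would yield an LP_m model of `K` with fewer glutted variables.
So `∼_λ` is an MCR. Under a `∼_λ`-renaming `ρ`, the same valuation is a model of `ρ(K)`, hence of
`φ[p/q]` for the tuple given by `K ⊩₁ φ`, and each chosen `q` takes a value inside `λ(p)`;
evaluating `φ` pointwise inside `λ` then puts `1 ∈ λ(φ)`.
-/

namespace Occ

lemma occAt_mem_vars {φ : Form} {l : List Step} {pol : Bool} {p : ℕ} {pol' : Bool}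
    (h : occAt φ l pol = some (p, pol')) : p ∈ vars φ := by
  induction φ generalizing l pol with
  | var q => cases l <;> simp_all [occAt, vars]
  | neg ψ ih =>
      rcases l with _ | ⟨_ | _ | _, l⟩ <;> simp only [occAt, reduceCtorEq] at h
      exact ih h
  | conj ψ χ ih₁ ih₂ =>
      rcases l with _ | ⟨_ | _ | _, l⟩ <;> simp only [occAt, reduceCtorEq] at h
      · exact Finset.mem_union_left _ (ih₁ h)
      · exact Finset.mem_union_right _ (ih₂ h)

lemma exists_occAt_of_mem_vars {φ : Form} {p : ℕ} (hp : p ∈ vars φ) (pol : Bool) :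
    ∃ l pol', occAt φ l pol = some (p, pol') := by
  induction φ generalizing pol with
  | var q => exact ⟨[], pol, by simp_all [occAt, vars]⟩
  | neg ψ ih =>
      obtain ⟨l, pol', h⟩ := ih hp (!pol)
      exact ⟨.neg :: l, pol', h⟩
  | conj ψ χ ih₁ ih₂ =>
      rcases Finset.mem_union.mp hp with hp | hp
      · obtain ⟨l, pol', h⟩ := ih₁ hp pol
        exact ⟨.left :: l, pol', h⟩
      · obtain ⟨l, pol', h⟩ := ih₂ hp pol
        exact ⟨.right :: l, pol', h⟩

section Occurrences

variable {K : PB} {o : Occurrence} {p p' : ℕ} {pol pol' : Bool}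

lemma IsOccOf.isOcc (h : IsOccOf K o p pol) : IsOcc K o := ⟨h.1, p, pol, h.2⟩

lemma IsOccOf.mem_varsPB (h : IsOccOf K o p pol) : p ∈ varsPB K :=
  Finset.le_sup (f := vars) h.1 (occAt_mem_vars h.2)

lemma IsOccOf.unique (h : IsOccOf K o p pol) (h' : IsOccOf K o p' pol') :
    p = p' ∧ pol = pol' :=
  Prod.mk.inj (Option.some.inj (h.2.symm.trans h'.2))

lemma exists_isOccVar_of_mem_varsPB (hp : p ∈ varsPB K) : ∃ o, IsOccVar K o p := by
  obtain ⟨ψ, hψ, hp⟩ := Finset.mem_sup.mp hp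
  obtain ⟨l, pol, h⟩ := exists_occAt_of_mem_vars hp true
  exact ⟨(ψ, l), pol, hψ, h⟩

end Occurrences

lemma eq_singleton_of_nonempty_of_ne_univ {s : Set Bool} (hne : s.Nonempty)
    (hu : s ≠ Set.univ) : ∃ b, s = {b} := by
  obtain ⟨b, hb⟩ := hne
  refine ⟨b, Set.eq_singleton_iff_unique_mem.mpr ⟨hb, fun c hc => ?_⟩⟩
  by_contra hcb
  exact hu (Set.eq_univ_of_forall fun d => by
    cases b <;> cases c <;> cases d <;> simp_all)

section muVal

variable {lam : ℕ → Set Bool} {p : ℕ} {pol : Bool}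

open scoped Classical in
noncomputable def muVal (lam : ℕ → Set Bool) (p : ℕ) (pol : Bool) : Bool :=
  if lam p = ({false} : Set Bool) then false
  else if lam p = ({true} : Set Bool) then true
  else pol

lemma muOf_eq {o : Occurrence} (h : occAt o.1 o.2 true = some (p, pol)) :
    muOf lam o = muVal lam p pol := by
  simp [muOf, muVal, h]

lemma muVal_of_mem (h : pol ∈ lam p) : muVal lam p pol = pol := by
  unfold muVal
  split_ifs with h₀ h₁ <;> simp_all

lemma muVal_of_eq_singleton {b : Bool} (h : lam p = {b}) : muVal lam p pol = b := by
  cases b <;> simp [muVal, h]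

lemma muVal_mem (hne : (lam p).Nonempty) : muVal lam p pol ∈ lam p := by
  by_cases hu : lam p = Set.univ
  · simp [hu]
  · obtain ⟨b, hb⟩ := eq_singleton_of_nonempty_of_ne_univ hne hu
    simp [muVal_of_eq_singleton hb, hb]

lemma muVal_eq_of_ne_univ (hne : (lam p).Nonempty) (hu : lam p ≠ Set.univ) (pol' : Bool) :
    muVal lam p pol = muVal lam p pol' := by
  obtain ⟨b, hb⟩ := eq_singleton_of_nonempty_of_ne_univ hne hu
  rw [muVal_of_eq_singleton hb, muVal_of_eq_singleton hb]

end muVal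

variable {lam : ℕ → Set Bool} {K : PB}

/-- Valuing every occurrence by `muVal` relative to the target value `pol` is the best Boolean
choice: it realises every value that `λ` allows. -/
lemma eval_renameBy_of_mem_lpEval {φ : Form} {pol : Bool} {f : List Step → ℕ} {w : ℕ → Bool}
    (hw : ∀ l p pol', occAt φ l pol = some (p, pol') → w (f l) = muVal lam p pol')
    (hφ : pol ∈ lpEval lam φ) : eval w (renameBy f φ) = pol := by
  induction φ generalizing pol f with
  | var q => exact (hw [] q pol rfl).trans (muVal_of_mem hφ)
  | neg ψ ih =>
      obtain ⟨v, hv, rfl⟩ := hφ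
      have := ih (pol := v) (f := fun l => f (.neg :: l))
        (fun l p pol' h => hw (.neg :: l) p pol' (by simpa [occAt] using h)) hv
      simp [renameBy, eval, this]
  | conj ψ χ ih₁ ih₂ =>
      obtain ⟨v, hv, v', hv', rfl⟩ := hφ
      -- the conjuncts inherit the target `v && v'`, which is the value of one of them
      have h₁ (hv₁ : (v && v') = v) := ih₁ (f := fun l => f (.left :: l))
        (fun l p pol' h => hw (.left :: l) p pol' (by rw [← hv₁] at h; exact h)) hv
      have h₂ (hv₂ : (v && v') = v') := ih₂ (f := fun l => f (.right :: l))
        (fun l p pol' h => hw (.right :: l) p pol' (by rw [← hv₂] at h; exact h)) hv'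
      cases v <;> cases v' <;> simp_all [renameBy, eval]

lemma eval_renameBy_mem_lpEval {φ : Form} {pol : Bool} {f : List Step → ℕ} {w : ℕ → Bool}
    (hw : ∀ l p pol', occAt φ l pol = some (p, pol') → w (f l) ∈ lam p) :
    eval w (renameBy f φ) ∈ lpEval lam φ := by
  induction φ generalizing pol f with
  | var q => exact hw [] q pol rfl
  | neg ψ ih => exact ⟨_, ih (pol := !pol) fun l p pol' h => hw (.neg :: l) p pol' h, rfl⟩
  | conj ψ χ ih₁ ih₂ =>
      exact Set.mem_image2_of_mem (ih₁ fun l p pol' h => hw (.left :: l) p pol' h)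
        (ih₂ fun l p pol' h => hw (.right :: l) p pol' h)

lemma eval_substV_mem_lpEval {σ : ℕ → ℕ} {w : ℕ → Bool} {φ : Form}
    (hw : ∀ p ∈ vars φ, w (σ p) ∈ lam p) : eval w (substV σ φ) ∈ lpEval lam φ := by
  induction φ with
  | var q => exact hw q (Finset.mem_singleton_self q)
  | neg ψ ih => exact ⟨_, ih hw, rfl⟩
  | conj ψ χ ih₁ ih₂ =>
      exact Set.mem_image2_of_mem (ih₁ fun p hp => hw p (Finset.mem_union_left _ hp))
        (ih₂ fun p hp => hw p (Finset.mem_union_right _ hp))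

lemma eval_renameForm_of_muOf (hM : LPModelPB lam K) {ρ : Occurrence → ℕ} {w : ℕ → Bool}
    (hw : ∀ o, IsOcc K o → w (ρ o) = muOf lam o) :
    ∀ ψ ∈ K, eval w (renameForm ρ ψ) = true := fun ψ hψ =>
  eval_renameBy_of_mem_lpEval (fun l _ _ h => (hw (ψ, l) ⟨hψ, _, _, h⟩).trans (muOf_eq h))
    (hM ψ hψ)

lemma exists_valuation_comp_eq {ρ : Occurrence → ℕ} {μ : Occurrence → Bool} (g : ℕ → Bool)
    (hμ : ∀ o o', IsOcc K o → IsOcc K o' → ρ o = ρ o' → μ o = μ o') :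
    ∃ w : ℕ → Bool, (∀ o, IsOcc K o → w (ρ o) = μ o) ∧
      ∀ q, (∀ o, IsOcc K o → ρ o ≠ q) → w q = g q := by
  classical
  refine ⟨fun q => if hq : ∃ o, IsOcc K o ∧ ρ o = q then μ hq.choose else g q, ?_, ?_⟩
  · intro o ho
    have hq : ∃ o', IsOcc K o' ∧ ρ o' = ρ o := ⟨o, ho, rfl⟩
    simp only [dif_pos hq]
    exact hμ _ _ hq.choose_spec.1 ho hq.choose_spec.2
  · intro q hq
    exact dif_neg fun ⟨o, ho, e⟩ => hq o ho e

lemma lamRel_isEquivOn : IsEquivOn K (lamRel K lam) where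
  dom := fun _ ⟨_, _, _, h₁, h₂, _⟩ => ⟨h₁.isOcc, h₂.isOcc⟩
  refl := fun _ ⟨hm, p, pol, h⟩ => ⟨p, pol, pol, ⟨hm, h⟩, ⟨hm, h⟩, fun _ => rfl⟩
  symm := fun _ ⟨p, pol, pol', h₁, h₂, hc⟩ => ⟨p, pol', pol, h₂, h₁, fun hu => (hc hu).symm⟩
  trans := by
    rintro a b c ⟨p, pol, pol', h₁, h₂, hc⟩ ⟨p₂, pol₂, pol₂', h₃, h₄, hc₂⟩
    obtain ⟨rfl, rfl⟩ := h₂.unique h₃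
    exact ⟨p, pol, pol₂', h₁, h₄, fun hu => (hc hu).trans (hc₂ hu)⟩

lemma lamRel_compliant : Compliant (lamRel K lam) :=
  fun _ ⟨p, pol, pol', h₁, h₂, _⟩ => ⟨p, pol, pol', h₁.2, h₂.2⟩

lemma mem_lamRel_iff {o o' : Occurrence} {p p' : ℕ} {pol pol' : Bool} (h : IsOccOf K o p pol)
    (h' : IsOccOf K o' p' pol') :
    (o, o') ∈ lamRel K lam ↔ p = p' ∧ (lam p = Set.univ → pol = pol') := by
  constructor
  · rintro ⟨q, b, b', hq, hq', hc⟩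
    obtain ⟨rfl, rfl⟩ := hq.unique h
    obtain ⟨rfl, rfl⟩ := hq'.unique h'
    exact ⟨rfl, hc⟩
  · rintro ⟨rfl, hc⟩
    exact ⟨p, pol, pol', h, h', hc⟩

lemma muOf_eq_of_mem_lamRel (hI : IsLPInterp lam) {o o' : Occurrence}
    (h : (o, o') ∈ lamRel K lam) : muOf lam o = muOf lam o' := by
  obtain ⟨p, pol, pol', h₁, h₂, hc⟩ := h
  rw [muOf_eq h₁.2, muOf_eq h₂.2]
  by_cases hu : lam p = Set.univ
  · rw [hc hu]
  · exact muVal_eq_of_ne_univ (hI p) hu pol'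

lemma lamRel_relConsistent {R : Occurrence → ℕ} (hR : IsCRenaming K R) (hI : IsLPInterp lam)
    (hM : LPModelPB lam K) : RelConsistent K R (lamRel K lam) := by
  obtain ⟨w, hw, -⟩ := exists_valuation_comp_eq (μ := muOf lam) (fun _ => false)
    fun o o' ho ho' e => by rw [hR.inj o o' ho ho' e]
  refine ⟨w, eval_renameForm_of_muOf hM hw, fun q hq => ?_⟩
  obtain ⟨ho, ho'⟩ := lamRel_isEquivOn.dom q hq
  rw [hw _ ho, hw _ ho']
  exact muOf_eq_of_mem_lamRel hI hq

section Maximality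

variable {R : Occurrence → ℕ} {w : ℕ → Bool}

def occValues (K : PB) (R : Occurrence → ℕ) (w : ℕ → Bool) (lam : ℕ → Set Bool) :
    ℕ → Set Bool :=
  fun q => if q ∈ varsPB K then {v | ∃ o, IsOccVar K o q ∧ w (R o) = v} else lam q

lemma occValues_of_mem_varsPB {q : ℕ} (hq : q ∈ varsPB K) :
    occValues K R w lam q = {v | ∃ o, IsOccVar K o q ∧ w (R o) = v} :=
  if_pos hq

lemma occValues_of_notMem_varsPB {q : ℕ} (hq : q ∉ varsPB K) : occValues K R w lam q = lam q :=
  if_neg hq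

lemma isLPInterp_occValues (hI : IsLPInterp lam) : IsLPInterp (occValues K R w lam) := by
  intro q
  by_cases hq : q ∈ varsPB K
  · obtain ⟨o, ho⟩ := exists_isOccVar_of_mem_varsPB hq
    exact ⟨w (R o), by rw [occValues_of_mem_varsPB hq]; exact ⟨o, ho, rfl⟩⟩
  · rw [occValues_of_notMem_varsPB hq]
    exact hI q

lemma lpModelPB_occValues (hw : ∀ ψ ∈ K, eval w (renameForm R ψ) = true) :
    LPModelPB (occValues K R w lam) K := by
  intro ψ hψ
  rw [← hw ψ hψ]
  refine eval_renameBy_mem_lpEval (pol := true) fun l p pol h => ?_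
  have hp : IsOccOf K (ψ, l) p pol := ⟨hψ, h⟩
  rw [occValues_of_mem_varsPB hp.mem_varsPB]
  exact ⟨(ψ, l), ⟨pol, hp⟩, rfl⟩

lemma exists_ne_of_mem_lpBang_occValues {q : ℕ} (hq : q ∈ varsPB K)
    (h : q ∈ lpBang (occValues K R w lam)) :
    ∃ o o', IsOccVar K o q ∧ IsOccVar K o' q ∧ w (R o) ≠ w (R o') := by
  have hf : false ∈ occValues K R w lam q := h ▸ Set.mem_univ false
  have ht : true ∈ occValues K R w lam q := h ▸ Set.mem_univ true
  rw [occValues_of_mem_varsPB hq] at hf ht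
  obtain ⟨o, ho, hwo⟩ := hf
  obtain ⟨o', ho', hwo'⟩ := ht
  exact ⟨o, o', ho, ho', by rw [hwo, hwo']; decide⟩

lemma lpBang_occValues_subset (hw : ∀ q ∈ lamRel K lam, w (R q.1) = w (R q.2)) :
    lpBang (occValues K R w lam) ⊆ lpBang lam := by
  intro q h
  by_cases hq : q ∈ varsPB K
  · obtain ⟨o, o', ⟨pol, ho⟩, ⟨pol', ho'⟩, hne⟩ := exists_ne_of_mem_lpBang_occValues hq h
    by_contra hu
    exact hne (hw (o, o') ((mem_lamRel_iff ho ho').2 ⟨rfl, fun h' => absurd h' hu⟩))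
  · simpa [lpBang, occValues_of_notMem_varsPB hq] using h

/-- A consistent compliant equivalence strictly coarser than `∼_λ` must merge the positive and
negative occurrences of some glutted variable `p`; reading the LP_m interpretation off a model
then un-gluts `p` without glutting anything new. -/
lemma lamRel_maximal (R : Occurrence → ℕ) (hI : IsLPInterp lam)
    (hmin : ∀ lam', IsLPInterp lam' → LPModelPB lam' K → ¬ lpBang lam' ⊂ lpBang lam)
    (r : Rel) (hr : IsEquivOn K r) (hcomp : Compliant r) (hcons : RelConsistent K R r) :
    ¬ lamRel K lam ⊂ r := by
  intro hsub
  obtain ⟨w, hwK, hwr⟩ := hcons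
  obtain ⟨⟨a, b⟩, hab, hab'⟩ := Set.exists_of_ssubset hsub
  obtain ⟨p, pa, pb, ha, hb⟩ := hcomp _ hab
  replace ha : IsOccOf K a p pa := ⟨(hr.dom _ hab).1.1, ha⟩
  replace hb : IsOccOf K b p pb := ⟨(hr.dom _ hab).2.1, hb⟩
  obtain ⟨hu, hpab⟩ : lam p = Set.univ ∧ pa ≠ pb :=
    Classical.not_imp.mp fun h => hab' ((mem_lamRel_iff ha hb).2 ⟨rfl, h⟩)
  have hrel : ∀ o, IsOccVar K o p → (o, a) ∈ r := by
    rintro o ⟨pol, ho⟩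
    by_cases hpol : pol = pa
    · exact hsub.1 ((mem_lamRel_iff ho ha).2 ⟨rfl, fun _ => hpol⟩)
    · have hpol' : pol = pb := by cases pol <;> cases pa <;> cases pb <;> simp_all
      exact hr.trans o b a (hsub.1 ((mem_lamRel_iff ho hb).2 ⟨rfl, fun _ => hpol'⟩))
        (hr.symm _ hab)
  have hp : p ∉ lpBang (occValues K R w lam) := fun h => by
    obtain ⟨o, o', ho, ho', hne⟩ := exists_ne_of_mem_lpBang_occValues ha.mem_varsPB h
    exact hne ((hwr _ (hrel o ho)).trans (hwr _ (hrel o' ho')).symm)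
  refine hmin _ (isLPInterp_occValues hI) (lpModelPB_occValues hwK)
    ((Set.ssubset_iff_of_subset (lpBang_occValues_subset fun q hq => hwr q (hsub.1 hq))).2
      ⟨p, hu, hp⟩)

end Maximality

lemma isMCR_lamRel {R : Occurrence → ℕ} (hR : IsCRenaming K R) (hlam : MinLPModelPB K lam) :
    IsMCR K R (lamRel K lam) :=
  ⟨lamRel_isEquivOn, lamRel_compliant, lamRel_relConsistent hR hlam.1 hlam.2.1,
    lamRel_maximal R hlam.1 hlam.2.2⟩

section Renaming

variable {N : ℕ} {o : Occurrence} {p : ℕ} {pol : Bool}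

open scoped Classical in
/-- A `∼_λ`-renaming. Names below `N` are kept for the classes that are all of `Occ(p,K)`, which
must be named `p`; the other classes are those of the occurrences of a glutted `p` of one
polarity. -/
noncomputable def lamRenaming (K : PB) (lam : ℕ → Set Bool) (N : ℕ) (o : Occurrence) : ℕ :=
  match occAt o.1 o.2 true with
  | some (p, pol) =>
      if ∀ o', IsOccVar K o' p → (o, o') ∈ lamRel K lam then p else N + (2 * p + pol.toNat)
  | none => 0

lemma lamRenaming_of_forall (h : IsOccOf K o p pol)
    (hall : ∀ o', IsOccVar K o' p → (o, o') ∈ lamRel K lam) : lamRenaming K lam N o = p := by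
  simp only [lamRenaming, h.2, if_pos hall]

lemma lamRenaming_of_not_forall (h : IsOccOf K o p pol)
    (hall : ¬ ∀ o', IsOccVar K o' p → (o, o') ∈ lamRel K lam) :
    lamRenaming K lam N o = N + (2 * p + pol.toNat) := by
  simp only [lamRenaming, h.2, if_neg hall]

lemma lamRenaming_mem_varsPB_or_le (ho : IsOcc K o) :
    lamRenaming K lam N o ∈ varsPB K ∨ N ≤ lamRenaming K lam N o := by
  obtain ⟨p, pol, h⟩ := ho.2
  have h : IsOccOf K o p pol := ⟨ho.1, h⟩
  by_cases hall : ∀ o', IsOccVar K o' p → (o, o') ∈ lamRel K lam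
  · exact .inl (lamRenaming_of_forall h hall ▸ h.mem_varsPB)
  · exact .inr (lamRenaming_of_not_forall h hall ▸ Nat.le_add_right N _)

lemma two_mul_add_toNat_inj {p p' : ℕ} {b b' : Bool} :
    2 * p + b.toNat = 2 * p' + b'.toNat ↔ p = p' ∧ b = b' := by
  cases b <;> cases b' <;> simp <;> omega

lemma forall_mem_lamRel_of_ne_univ (h : IsOccOf K o p pol) (hu : lam p ≠ Set.univ) :
    ∀ o', IsOccVar K o' p → (o, o') ∈ lamRel K lam :=
  fun _ ⟨_, h'⟩ => (mem_lamRel_iff h h').2 ⟨rfl, fun hu' => absurd hu' hu⟩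

lemma IsEquivOn.forall_mem_of_mem {r : Rel} (hr : IsEquivOn K r) {o' : Occurrence}
    (ho : (o, o') ∈ r) (hall : ∀ o'', IsOccVar K o'' p → (o, o'') ∈ r) :
    ∀ o'', IsOccVar K o'' p → (o', o'') ∈ r :=
  fun o'' ho'' => hr.trans o' o o'' (hr.symm _ ho) (hall o'' ho'')

lemma isClassRenaming_lamRenaming (hN : ∀ p ∈ varsPB K, p < N) :
    IsClassRenaming K (lamRel K lam) (lamRenaming K lam N) := by
  refine ⟨fun o o' ho ho' => ?_, fun o p ⟨pol, h⟩ hall => lamRenaming_of_forall h hall⟩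
  obtain ⟨p, pol, h⟩ := ho.2
  obtain ⟨p', pol', h'⟩ := ho'.2
  replace h : IsOccOf K o p pol := ⟨ho.1, h⟩
  replace h' : IsOccOf K o' p' pol' := ⟨ho'.1, h'⟩
  have hp := hN p h.mem_varsPB
  have hp' := hN p' h'.mem_varsPB
  have hrel := mem_lamRel_iff (lam := lam) h h'
  by_cases hall : ∀ o'', IsOccVar K o'' p → (o, o'') ∈ lamRel K lam <;>
    by_cases hall' : ∀ o'', IsOccVar K o'' p' → (o', o'') ∈ lamRel K lam
  · rw [lamRenaming_of_forall h hall, lamRenaming_of_forall h' hall']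
    exact ⟨fun e => hall o' ⟨pol', e ▸ h'⟩, fun hr => (hrel.1 hr).1⟩
  · rw [lamRenaming_of_forall h hall, lamRenaming_of_not_forall h' hall']
    refine iff_of_false (by omega) fun hr => hall' ?_
    obtain rfl := (hrel.1 hr).1
    exact lamRel_isEquivOn.forall_mem_of_mem hr hall
  · rw [lamRenaming_of_not_forall h hall, lamRenaming_of_forall h' hall']
    refine iff_of_false (by omega) fun hr => hall ?_
    obtain rfl := (hrel.1 hr).1
    exact lamRel_isEquivOn.forall_mem_of_mem (lamRel_isEquivOn.symm _ hr) hall'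
  · have hu : lam p = Set.univ := by_contra fun hu => hall (forall_mem_lamRel_of_ne_univ h hu)
    rw [lamRenaming_of_not_forall h hall, lamRenaming_of_not_forall h' hall', add_right_inj,
      two_mul_add_toNat_inj, hrel]
    simp only [hu, forall_const]

end Renaming

end Occ

/-- Theorem 4: `K ⊩₁ φ` implies `K ⊢_{LPm} φ`. -/
theorem inf1_implies_LPm (K : Occ.PB)
    (R : Occ.Occurrence → ℕ) (hR : Occ.IsCRenaming K R)
    (φ : Occ.Form) (h : Occ.Inf1 K R φ) :
    Occ.LPmEntails K φ := by
  open Occ in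
  intro lam hlam
  obtain ⟨N, hN⟩ : ∃ N, ∀ p ∈ varsPB K ∪ vars φ, p < N :=
    ⟨(varsPB K ∪ vars φ).sup id + 1, fun p hp => Nat.lt_succ_of_le (Finset.le_sup (f := id) hp)⟩
  have hρ : IsClassRenaming K (lamRel K lam) (lamRenaming K lam N) :=
    isClassRenaming_lamRenaming fun p hp => hN p (Finset.mem_union_left _ hp)
  obtain ⟨σ, hσ, hent⟩ := h _ _ (isMCR_lamRel hR hlam) hρ
  obtain ⟨w, hwρ, hwg⟩ := exists_valuation_comp_eq (μ := muOf lam) (fun q => muVal lam q true)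
    fun o o' ho ho' e => muOf_eq_of_mem_lamRel hlam.1 (((hρ.1 o o' ho ho').1 e))
  have hφ := eval_substV_mem_lpEval (lam := lam) (w := w) (σ := σ) (φ := φ) fun p hp => by
    by_cases hpK : p ∈ varsPB K
    · obtain ⟨o, ⟨pol, ho⟩, e⟩ := hσ.1 p hpK hp
      rw [e, hwρ o ho.isOcc, muOf_eq ho.2]
      exact muVal_mem (hlam.1 p)
    · rw [hσ.2 p fun h' => hpK h'.1, hwg p fun o ho e => ?_]
      · exact muVal_mem (hlam.1 p)
      · have := hN p (Finset.mem_union_right _ hp)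
        rcases lamRenaming_mem_varsPB_or_le (lam := lam) (N := N) ho with h' | h' <;> rw [e] at h'
        exacts [hpK h', by omega]
  rwa [hent w (eval_renameForm_of_muOf hlam.2.1 hwρ)] at hφ
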